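/- Let c ∈ (0,1/2), a₀ > 0 the unique positive root of cosh(a)e^{-ca²} = 1, and f_c(t,x) = ∫₀^∞ e^{ax-ca²t}[cosh(a)e^{-ca²} - 1] da. If f_c(t,x) ≥ 0 and δ ≥ 0, ε ∈ ℝ satisfy ε ≤ a₀δc, then f_c(t+δ, x+ε) ≥ e^{εa₀ - δca₀²} f_c(t,x) ≥ 0. -/

import Mathlib

/-!
Write `λ(a) = cosh a · e^{-ca²} - 1` and `K = e^{εa₀ - δca₀²}`. Then
`f(t+δ, x+ε) - K f(t, x) = ∫₀^∞ e^{ax - ca²t} (e^{εa - δca²} - K) λ(a) da`, and the integrand is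
pointwise nonnegative: for `a > 0`, `εa - δca² - (εa₀ - δca₀²) = (a - a₀)(ε - δc(a + a₀))` with
`ε - δc(a + a₀) ≤ -δca ≤ 0`, so `e^{εa - δca²} - K` is `≥ 0` on `(0, a₀]` and `≤ 0` on `[a₀, ∞)`,
exactly like `λ`. The sign pattern of `λ` holds because `λ(a) = e^{a²(g(a) - c)} - 1` with
`g(a) = log cosh a / a²` decreasing on `(0, ∞)` and `g(a₀) = c`.
-/

open MeasureTheory Real Set

theorem integrable_exp_quadratic {b : ℝ} (hb : 0 < b) (c d : ℝ) :
    Integrable fun x : ℝ => exp (-b * x ^ 2 + c * x + d) := by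
  have := (integrable_cexp_quadratic (b := (b : ℂ)) (by simpa using hb) c d).norm
  simpa [Complex.norm_exp, ← Complex.ofReal_pow] using this

theorem integrable_fc_integrand {c t : ℝ} (hc : 0 < c) (ht : 0 < t) (x : ℝ) :
    Integrable fun a => exp (a * x - c * a ^ 2 * t) * (cosh a * exp (-c * a ^ 2) - 1) := by
  -- `cosh a = (eᵃ + e⁻ᵃ) / 2` splits the integrand into three Gaussians.
  have hexp (b : ℝ) (hb : 0 < b) (y : ℝ) := integrable_exp_quadratic hb y 0
  refine ((((hexp _ (by positivity : 0 < c * (t + 1)) (x + 1)).add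
    (hexp _ (by positivity : 0 < c * (t + 1)) (x - 1))).div_const 2).sub
    (hexp _ (mul_pos hc ht) x)).congr (ae_of_all _ fun a => ?_)
  simp only [Pi.add_apply, Pi.sub_apply, cosh_eq]
  ring_nf
  simp only [← exp_add]
  ring_nf

theorem mul_sinh_div_cosh_le_two_mul_log_cosh {a : ℝ} (ha : 0 ≤ a) :
    a * (sinh a / cosh a) ≤ 2 * log (cosh a) := by
  have hderiv (w : ℝ) : HasDerivAt (fun w => 2 * log (cosh w) - w * (sinh w / cosh w))
      (2 * (sinh w / cosh w) - (1 * (sinh w / cosh w) +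
        w * ((cosh w * cosh w - sinh w * sinh w) / cosh w ^ 2))) w :=
    (((hasDerivAt_cosh w).log (cosh_pos w).ne').const_mul 2).sub
      ((hasDerivAt_id w).mul ((hasDerivAt_sinh w).div (hasDerivAt_cosh w) (cosh_pos w).ne'))
  have hmono : MonotoneOn (fun w => 2 * log (cosh w) - w * (sinh w / cosh w)) (Ici 0) := by
    refine monotoneOn_of_hasDerivWithinAt_nonneg (convex_Ici 0)
      (fun w _ => (hderiv w).continuousAt.continuousWithinAt)
      (fun w _ => (hderiv w).hasDerivWithinAt) fun w hw => ?_
    rw [interior_Ici, mem_Ioi] at hw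
    have hsinh : w ≤ sinh w := self_le_sinh_iff.2 hw.le
    have hcosh : 1 ≤ cosh w := one_le_cosh w
    have hpyth : cosh w ^ 2 - sinh w ^ 2 = 1 := cosh_sq_sub_sinh_sq w
    have hsimp : 2 * (sinh w / cosh w) - (1 * (sinh w / cosh w) +
        w * ((cosh w * cosh w - sinh w * sinh w) / cosh w ^ 2)) =
        (sinh w * cosh w - w) / cosh w ^ 2 := by
      field_simp
      linear_combination (-w) * hpyth
    rw [hsimp]
    apply div_nonneg _ (by positivity)
    nlinarith
  simpa using hmono (mem_Ici.2 le_rfl) ha ha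

theorem antitoneOn_log_cosh_div_sq : AntitoneOn (fun a => log (cosh a) / a ^ 2) (Ioi 0) := by
  have hderiv (w : ℝ) (hw : w ≠ 0) : HasDerivAt (fun a => log (cosh a) / a ^ 2)
      ((sinh w / cosh w * w ^ 2 - log (cosh w) * (2 * w)) / (w ^ 2) ^ 2) w := by
    refine (((hasDerivAt_cosh w).log (cosh_pos w).ne').div (hasDerivAt_pow 2 w)
      (by positivity)).congr_deriv ?_
    norm_num
  refine antitoneOn_of_hasDerivWithinAt_nonpos (convex_Ioi 0)
    (fun w hw => (hderiv w (ne_of_gt hw)).continuousAt.continuousWithinAt)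
    (fun w hw => (hderiv w (ne_of_gt (interior_subset hw))).hasDerivWithinAt) fun w hw => ?_
  rw [interior_Ioi, mem_Ioi] at hw
  apply div_nonpos_of_nonpos_of_nonneg _ (by positivity)
  nlinarith [mul_sinh_div_cosh_le_two_mul_log_cosh hw.le]

theorem cosh_mul_exp_neg_mul_sq_eq {a : ℝ} (ha : a ≠ 0) (c : ℝ) :
    cosh a * exp (-c * a ^ 2) = exp (a ^ 2 * (log (cosh a) / a ^ 2 - c)) := by
  rw [mul_sub, mul_div_cancel₀ _ (by positivity), exp_sub, exp_log (cosh_pos a), div_eq_mul_inv,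
    ← exp_neg, neg_mul, mul_comm c]

section Root

variable {c a₀ a : ℝ} (ha₀ : 0 < a₀) (hroot : cosh a₀ * exp (-c * a₀ ^ 2) = 1)
include ha₀ hroot

theorem log_cosh_div_sq_eq_of_root : log (cosh a₀) / a₀ ^ 2 = c := by
  rw [cosh_mul_exp_neg_mul_sq_eq ha₀.ne', exp_eq_one_iff, mul_eq_zero] at hroot
  rcases hroot with h | h
  · exact absurd h (by positivity)
  · linarith

theorem one_le_cosh_mul_exp_neg_mul_sq (ha : 0 < a) (h : a ≤ a₀) :
    1 ≤ cosh a * exp (-c * a ^ 2) := by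
  have hg : log (cosh a₀) / a₀ ^ 2 ≤ log (cosh a) / a ^ 2 := antitoneOn_log_cosh_div_sq ha ha₀ h
  rw [log_cosh_div_sq_eq_of_root ha₀ hroot] at hg
  rw [cosh_mul_exp_neg_mul_sq_eq ha.ne']
  exact one_le_exp (mul_nonneg (sq_nonneg a) (by simpa using hg))

theorem cosh_mul_exp_neg_mul_sq_le_one (h : a₀ ≤ a) : cosh a * exp (-c * a ^ 2) ≤ 1 := by
  have hg : log (cosh a) / a ^ 2 ≤ log (cosh a₀) / a₀ ^ 2 :=
    antitoneOn_log_cosh_div_sq ha₀ (ha₀.trans_le h) h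
  rw [log_cosh_div_sq_eq_of_root ha₀ hroot] at hg
  rw [cosh_mul_exp_neg_mul_sq_eq (ha₀.trans_le h).ne', exp_le_one_iff]
  exact mul_nonpos_of_nonneg_of_nonpos (sq_nonneg a) (by simpa using hg)

variable {δ ε : ℝ}

theorem fc_shift_factor_mul_nonneg (hc : 0 < c) (hδ : 0 ≤ δ) (hε : ε ≤ a₀ * δ * c) (ha : 0 < a) :
    0 ≤ (exp (ε * a - δ * c * a ^ 2) - exp (ε * a₀ - δ * c * a₀ ^ 2)) *
      (cosh a * exp (-c * a ^ 2) - 1) := by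
  have hδc : 0 ≤ δ * c * a := by positivity
  rcases le_total a a₀ with h | h
  · refine mul_nonneg (sub_nonneg.2 (exp_le_exp.2 ?_))
      (sub_nonneg.2 (one_le_cosh_mul_exp_neg_mul_sq ha₀ hroot ha h))
    nlinarith
  · refine mul_nonneg_of_nonpos_of_nonpos (sub_nonpos.2 (exp_le_exp.2 ?_))
      (sub_nonpos.2 (cosh_mul_exp_neg_mul_sq_le_one ha₀ hroot h))
    nlinarith

theorem fc_integrand_propagation (hc : 0 < c) (hδ : 0 ≤ δ) (hε : ε ≤ a₀ * δ * c) (ha : 0 < a)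
    (t x : ℝ) :
    exp (ε * a₀ - δ * c * a₀ ^ 2) *
        (exp (a * x - c * a ^ 2 * t) * (cosh a * exp (-c * a ^ 2) - 1)) ≤
      exp (a * (x + ε) - c * a ^ 2 * (t + δ)) * (cosh a * exp (-c * a ^ 2) - 1) := by
  have hsplit : exp (a * (x + ε) - c * a ^ 2 * (t + δ)) =
      exp (a * x - c * a ^ 2 * t) * exp (ε * a - δ * c * a ^ 2) := by
    rw [← exp_add]
    ring_nf
  rw [hsplit, ← sub_nonneg]
  exact (mul_nonneg (exp_pos (a * x - c * a ^ 2 * t)).le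
    (fc_shift_factor_mul_nonneg ha₀ hroot hc hδ hε ha)).trans_eq (by ring)

end Root

theorem fc_propagation (c a₀ t x δ ε : ℝ) (hc : c ∈ Set.Ioo (0 : ℝ) (1 / 2))
    (ha₀ : 0 < a₀) (hroot : Real.cosh a₀ * Real.exp (-c * a₀ ^ 2) = 1)
    (f : ℝ → ℝ → ℝ)
    (hf : ∀ t x, f t x = ∫ a in Set.Ioi (0 : ℝ),
      Real.exp (a * x - c * a ^ 2 * t) * (Real.cosh a * Real.exp (-c * a ^ 2) - 1))
    (ht : 0 < t) (hfpos : 0 ≤ f t x) (hδ : 0 ≤ δ) (hε : ε ≤ a₀ * δ * c) :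
    Real.exp (ε * a₀ - δ * c * a₀ ^ 2) * f t x ≤ f (t + δ) (x + ε) ∧
      0 ≤ f (t + δ) (x + ε) := by
  have hmain : exp (ε * a₀ - δ * c * a₀ ^ 2) * f t x ≤ f (t + δ) (x + ε) := by
    rw [hf, hf, ← integral_const_mul]
    exact setIntegral_mono_on ((integrable_fc_integrand hc.1 ht x).integrableOn.const_mul _)
      (integrable_fc_integrand hc.1 (by linarith) (x + ε)).integrableOn measurableSet_Ioi
      fun a ha => fc_integrand_propagation ha₀ hroot hc.1 hδ hε ha t x
  exact ⟨hmain, (mul_nonneg (exp_pos _).le hfpos).trans hmain⟩
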